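/- arXiv:2005.12360 — 2 statements merged into one kernel-verified Lean document; each statement's English description precedes it below -/
import Mathlib

section
/- Fix α = (α_1,...,α_n) ∈ ℝ^n and β > 0, and define f_α(Q) = ∑_j α_j e^{β q_j}/∑_i e^{β q_i}. Then for any Q, Q̃ ∈ ℝ^n, |f_α(Q) − f_α(Q̃)| ≤ (β ‖α‖_d / 2) ‖Q − Q̃‖_∞, where ‖α‖_d = max_{i,j} |α_i − α_j|. -/
/-!
Moving `Q` to `Q̃` along the segment `Q + t (Q̃ - Q)`, the derivative of the Gibbs mean of `α` is
`β` times the Gibbs covariance of `α` and `Q̃ - Q`. By Cauchy–Schwarz this covariance is at most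
`√(Var α) · ‖Q̃ - Q‖_∞`, and a variable with values in an interval of length `‖α‖_d` has variance
at most `(‖α‖_d / 2)²` (its second moment about the midpoint of the interval). The mean value
theorem concludes.
-/

open Finset Real

section WeightedMoments

variable {ι : Type*} [Fintype ι] {p : ι → ℝ}

def weightedMean (p x : ι → ℝ) : ℝ := ∑ i, p i * x i

def weightedCov (p x y : ι → ℝ) : ℝ :=
  weightedMean p (x * y) - weightedMean p x * weightedMean p y

lemma nonempty_of_sum_eq_one (hp1 : ∑ i, p i = 1) : Nonempty ι :=
  univ_nonempty_iff.mp (nonempty_of_sum_ne_zero (by rw [hp1]; exact one_ne_zero))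

lemma weightedCov_eq_sum_centered (x y : ι → ℝ) :
    weightedCov p x y = ∑ i, p i * (x i - weightedMean p x) * y i := by
  simp only [weightedCov, weightedMean, Pi.mul_apply, mul_sum, ← sum_sub_distrib]
  exact sum_congr rfl fun i _ => by ring

lemma sum_mul_sub_weightedMean_sq_le (hp1 : ∑ i, p i = 1) (x : ι → ℝ) (c : ℝ) :
    ∑ i, p i * (x i - weightedMean p x) ^ 2 ≤ ∑ i, p i * (x i - c) ^ 2 := by
  set m := weightedMean p x
  have parallel_axis : ∑ i, p i * (x i - c) ^ 2 = ∑ i, p i * (x i - m) ^ 2 + (m - c) ^ 2 := by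
    have hterm : ∀ i, p i * (x i - c) ^ 2
        = p i * (x i - m) ^ 2 + 2 * (m - c) * (p i * x i) - 2 * (m - c) * m * p i
          + (m - c) ^ 2 * p i := fun i => by ring
    simp only [hterm, sum_add_distrib, sum_sub_distrib, ← mul_sum, hp1]
    simp only [m, weightedMean]
    ring
  linarith [sq_nonneg (m - c)]

lemma sum_mul_sub_weightedMean_sq_le_of_abs_sub_le (hp0 : ∀ i, 0 ≤ p i) (hp1 : ∑ i, p i = 1)
    {x : ι → ℝ} {D : ℝ} (hD : ∀ i j, |x i - x j| ≤ D) :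
    ∑ i, p i * (x i - weightedMean p x) ^ 2 ≤ (D / 2) ^ 2 := by
  have := nonempty_of_sum_eq_one hp1
  obtain ⟨iMax, hMax⟩ := Finite.exists_max x
  obtain ⟨iMin, hMin⟩ := Finite.exists_min x
  set c := (x iMax + x iMin) / 2 with hc_def
  have hc : ∀ i, (x i - c) ^ 2 ≤ (D / 2) ^ 2 := fun i => by
    have := hD iMax iMin
    rw [abs_of_nonneg (by linarith [hMax iMin])] at this
    exact sq_le_sq' (by linarith [hMin i]) (by linarith [hMax i])
  calc ∑ i, p i * (x i - weightedMean p x) ^ 2 ≤ ∑ i, p i * (x i - c) ^ 2 :=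
        sum_mul_sub_weightedMean_sq_le hp1 x c
    _ ≤ ∑ i, p i * (D / 2) ^ 2 := sum_le_sum fun i _ => mul_le_mul_of_nonneg_left (hc i) (hp0 i)
    _ = (D / 2) ^ 2 := by rw [← sum_mul, hp1, one_mul]

lemma abs_weightedCov_le (hp0 : ∀ i, 0 ≤ p i) (hp1 : ∑ i, p i = 1) {x y : ι → ℝ} {D S : ℝ}
    (hD : ∀ i j, |x i - x j| ≤ D) (hS : ∀ i, |y i| ≤ S) :
    |weightedCov p x y| ≤ D / 2 * S := by
  obtain ⟨i₀⟩ := nonempty_of_sum_eq_one hp1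
  have hD0 : 0 ≤ D := (abs_nonneg _).trans (hD i₀ i₀)
  have hS0 : 0 ≤ S := (abs_nonneg _).trans (hS i₀)
  set m := weightedMean p x
  have cauchy_schwarz : (∑ i, p i * (x i - m) * y i) ^ 2
      ≤ (∑ i, p i * (x i - m) ^ 2) * ∑ i, p i * y i ^ 2 :=
    sum_sq_le_sum_mul_sum_of_sq_le_mul _ (fun i _ => mul_nonneg (hp0 i) (sq_nonneg _))
      (fun i _ => mul_nonneg (hp0 i) (sq_nonneg _)) (fun i _ => le_of_eq (by ring))
  have second_moment : ∑ i, p i * y i ^ 2 ≤ S ^ 2 :=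
    calc ∑ i, p i * y i ^ 2 ≤ ∑ i, p i * S ^ 2 :=
          sum_le_sum fun i _ => mul_le_mul_of_nonneg_left (sq_le_sq' (abs_le.mp (hS i)).1
            (abs_le.mp (hS i)).2) (hp0 i)
      _ = S ^ 2 := by rw [← sum_mul, hp1, one_mul]
  rw [weightedCov_eq_sum_centered]
  refine abs_le_of_sq_le_sq ?_ (by positivity)
  calc _ ≤ (∑ i, p i * (x i - m) ^ 2) * ∑ i, p i * y i ^ 2 := cauchy_schwarz
    _ ≤ (D / 2) ^ 2 * S ^ 2 :=
        mul_le_mul (sum_mul_sub_weightedMean_sq_le_of_abs_sub_le hp0 hp1 hD) second_moment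
          (sum_nonneg fun i _ => mul_nonneg (hp0 i) (sq_nonneg _)) (sq_nonneg _)
    _ = (D / 2 * S) ^ 2 := by ring

end WeightedMoments

section Gibbs

variable {ι : Type*} [Fintype ι]

noncomputable def gibbs (β : ℝ) (Q : ι → ℝ) (j : ι) : ℝ :=
  exp (β * Q j) / ∑ i, exp (β * Q i)

lemma gibbs_nonneg (β : ℝ) (Q : ι → ℝ) (j : ι) : 0 ≤ gibbs β Q j := by
  unfold gibbs; positivity

lemma sum_gibbs [Nonempty ι] (β : ℝ) (Q : ι → ℝ) : ∑ j, gibbs β Q j = 1 := by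
  simp only [gibbs, ← sum_div]
  exact div_self (sum_pos (fun i _ => exp_pos _) univ_nonempty).ne'

lemma weightedMean_gibbs (β : ℝ) (Q x : ι → ℝ) :
    weightedMean (gibbs β Q) x = (∑ j, exp (β * Q j) * x j) / ∑ i, exp (β * Q i) := by
  simp only [weightedMean, gibbs, div_mul_eq_mul_div, sum_div]

lemma hasDerivAt_sum_exp_mul_line (β : ℝ) (Q v x : ι → ℝ) (t : ℝ) :
    HasDerivAt (fun s => ∑ j, exp (β * (Q + s • v) j) * x j)
      (β * ∑ j, exp (β * (Q + t • v) j) * (x j * v j)) t := by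
  rw [mul_sum]
  refine HasDerivAt.fun_sum fun j _ => ?_
  have hline : HasDerivAt (fun s => β * (Q + s • v) j) (β * v j) t := by
    simpa using ((hasDerivAt_id t).mul_const (v j)).const_add (Q j) |>.const_mul β
  exact (hline.exp.mul_const (x j)).congr_deriv (by ring)

lemma hasDerivAt_weightedMean_gibbs_line [Nonempty ι] (β : ℝ) (Q v x : ι → ℝ) (t : ℝ) :
    HasDerivAt (fun s => weightedMean (gibbs β (Q + s • v)) x)
      (β * weightedCov (gibbs β (Q + t • v)) x v) t := by
  have hZ := hasDerivAt_sum_exp_mul_line β Q v 1 t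
  have hN := hasDerivAt_sum_exp_mul_line β Q v x t
  simp only [Pi.one_apply, mul_one, one_mul] at hZ
  have hZpos : 0 < ∑ j, exp (β * (Q + t • v) j) := sum_pos (fun i _ => exp_pos _) univ_nonempty
  simp only [weightedMean_gibbs, weightedCov]
  refine (hN.div hZ hZpos.ne').congr_deriv ?_
  simp only [Pi.mul_apply]
  field_simp

lemma abs_weightedMean_gibbs_sub_le [Nonempty ι] {β D S : ℝ} (hβ : 0 ≤ β) {a Q Q' : ι → ℝ}
    (hD : ∀ i j, |a i - a j| ≤ D) (hS : ∀ i, |Q i - Q' i| ≤ S) :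
    |weightedMean (gibbs β Q) a - weightedMean (gibbs β Q') a| ≤ β * D / 2 * S := by
  have hderiv_le (t : ℝ) :
      |β * weightedCov (gibbs β (Q' + t • (Q - Q'))) a (Q - Q')| ≤ β * D / 2 * S := by
    rw [abs_mul, abs_of_nonneg hβ, mul_div_assoc, mul_assoc]
    exact mul_le_mul_of_nonneg_left
      (abs_weightedCov_le (gibbs_nonneg β _) (sum_gibbs β _) hD hS) hβ
  have mean_value := norm_image_sub_le_of_norm_deriv_le_segment_01'
    (fun t _ => (hasDerivAt_weightedMean_gibbs_line β Q' (Q - Q') a t).hasDerivWithinAt)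
    (fun t _ => hderiv_le t)
  simpa using mean_value

end Gibbs

/-- Sharp Lipschitz constant for a fixed linear functional of the Boltzmann
distribution: |f_α(Q) − f_α(Q̃)| ≤ (β‖α‖_d/2)‖Q − Q̃‖_∞ where
‖α‖_d = max_{i,j}|α_i − α_j|. -/
theorem boltzmann_linear_functional_lipschitz (n : ℕ) (β : ℝ) (hβ : 0 < β)
    (a Q Qt : Fin n → ℝ) :
    |(∑ j, a j * Real.exp (β * Q j) / (∑ i, Real.exp (β * Q i))) -
      ∑ j, a j * Real.exp (β * Qt j) / (∑ i, Real.exp (β * Qt i))| ≤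
      β * (⨆ i, ⨆ j, |a i - a j|) / 2 * ⨆ i, |Q i - Qt i| := by
  rcases isEmpty_or_nonempty (Fin n) with _ | _
  · simp
  have boltzmann_eq (R : Fin n → ℝ) : ∑ j, a j * exp (β * R j) / (∑ i, exp (β * R i))
      = weightedMean (gibbs β R) a := by
    simp only [weightedMean, gibbs, mul_div_assoc, mul_comm]
  rw [boltzmann_eq, boltzmann_eq]
  exact abs_weightedMean_gibbs_sub_le hβ.le
    (fun i j => (le_ciSup (Finite.bddAbove_range fun j => |a i - a j|) j).trans
      (le_ciSup (Finite.bddAbove_range fun i => ⨆ j, |a i - a j|) i))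
    (le_ciSup (Finite.bddAbove_range fun i => |Q i - Qt i|))
end

section
/- For 0 < λ < 1 and 1 > α ≥ (1−λ)·max{1, 2λ}, the function h_α(x) = α x (λ e^x + (1−λ)) − 2λ(1−λ)(e^x − 1) is nonnegative for all x ≥ 0. -/
/-!
Since `2 (eˣ - 1) ≤ x (eˣ + 1)` for `x ≥ 0` (that is, `tanh (x/2) ≤ x/2`), we get
`h_α(x) ≥ x · (λ(α - (1-λ)) eˣ + (1-λ)(α - λ))`. The bracket is nondecreasing in `eˣ`
because `α ≥ 1 - λ`, and at `eˣ = 1` it equals `α - 2λ(1-λ) ≥ 0`.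
-/

open Real

lemma Real.exp_sub_one_le_mul_exp (x : ℝ) : exp x - 1 ≤ x * exp x := by
  have h : (1 - x) * exp x ≤ exp (-x) * exp x :=
    mul_le_mul_of_nonneg_right (one_sub_le_exp_neg x) (exp_pos x).le
  rw [← exp_add, neg_add_cancel, exp_zero] at h
  linarith

lemma Real.two_mul_exp_sub_one_le (x : ℝ) (hx : 0 ≤ x) :
    2 * (exp x - 1) ≤ x * (exp x + 1) := by
  let g : ℝ → ℝ := fun t ↦ t * (exp t + 1) - 2 * (exp t - 1)
  have hg : ∀ t, HasDerivAt g (t * exp t - (exp t - 1)) t := by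
    intro t
    have := ((hasDerivAt_id' t).mul ((hasDerivAt_exp t).add_const 1)).sub
      (((hasDerivAt_exp t).sub_const 1).const_mul 2)
    exact this.congr_deriv (by ring)
  have hg_mono : Monotone g :=
    monotone_of_hasDerivAt_nonneg hg fun t ↦ sub_nonneg.2 (exp_sub_one_le_mul_exp t)
  have hg0x : g 0 ≤ g x := hg_mono hx
  simp only [g, exp_zero] at hg0x
  linarith

theorem h_alpha_nonneg_general (lam α : ℝ) (hlam0 : 0 < lam) (hlam1 : lam < 1)
    (hα : (1 - lam) * max 1 (2 * lam) ≤ α) :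
    ∀ x : ℝ, 0 ≤ x →
      0 ≤ α * x * (lam * Real.exp x + (1 - lam)) -
            2 * lam * (1 - lam) * (Real.exp x - 1) := by
  intro x hx
  rw [sub_nonneg]
  have hone_sub_lam : 0 ≤ 1 - lam := by linarith
  have hα_one : 1 - lam ≤ α := by
    linarith [mul_le_mul_of_nonneg_left (le_max_left 1 (2 * lam)) hone_sub_lam]
  have hα_two : 2 * lam * (1 - lam) ≤ α := by
    linarith [mul_le_mul_of_nonneg_left (le_max_right 1 (2 * lam)) hone_sub_lam]
  have hE : 1 ≤ exp x := one_le_exp hx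
  have hcoeff : 0 ≤ lam * (α - (1 - lam)) * exp x + (1 - lam) * (α - lam) := by
    linarith [mul_nonneg (mul_nonneg hlam0.le (sub_nonneg.2 hα_one)) (sub_nonneg.2 hE)]
  calc 2 * lam * (1 - lam) * (exp x - 1)
      = lam * (1 - lam) * (2 * (exp x - 1)) := by ring
    _ ≤ lam * (1 - lam) * (x * (exp x + 1)) :=
        mul_le_mul_of_nonneg_left (two_mul_exp_sub_one_le x hx) (mul_nonneg hlam0.le hone_sub_lam)
    _ = α * x * (lam * exp x + (1 - lam)) -
          x * (lam * (α - (1 - lam)) * exp x + (1 - lam) * (α - lam)) := by ring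
    _ ≤ α * x * (lam * exp x + (1 - lam)) := sub_le_self _ (mul_nonneg hx hcoeff)

/-- Base case of the exponential-smoothing lemma: for 0 < λ < 1 and
(1−λ)·max{1, 2λ} ≤ α < 1, the function
h_α(x) = αx(λe^x + (1−λ)) − 2λ(1−λ)(e^x − 1) is nonnegative for x ≥ 0. -/
theorem h_alpha_nonneg (lam α : ℝ) (hlam0 : 0 < lam) (hlam1 : lam < 1)
    (hα : (1 - lam) * max 1 (2 * lam) ≤ α) (hα1 : α < 1) :
    ∀ x : ℝ, 0 ≤ x →
      0 ≤ α * x * (lam * Real.exp x + (1 - lam)) -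
            2 * lam * (1 - lam) * (Real.exp x - 1) :=
  h_alpha_nonneg_general lam α hlam0 hlam1 hα
end
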